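/- For every poset P, the interval monoid Int(P) is noetherian (both proper left divisibility and proper right divisibility are well-founded) if and only if for every x in P there is no infinite strictly descending chain in the set of elements ≥ x and no infinite strictly ascending chain in the set of elements ≤ x. Moreover, the atoms of Int(P) are then exactly the intervals [x,y] where y is an immediate successor of x. -/

import Mathlib

/-! Common definitions: multifractions, divisibility, interval monoids, zigzags. -/

section Defs

variable {M : Type*}

/-- A multifraction on a monoid `M`: a finite sequence with entries alternately in `M`
(sign `true`) and in a formal disjoint copy of `M` (sign `false`). -/
structure Multifraction (M : Type*) [Monoid M] where
  entries : List (Bool × M)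
  alt : entries.Chain' fun p q => p.1 ≠ q.1

/-- The product of two multifraction entry lists: merge the adjacent entries when they have
the same sign, concatenate otherwise. -/
def mfMul [Monoid M] (l₁ l₂ : List (Bool × M)) : List (Bool × M) :=
  match l₁.getLast?, l₂ with
  | some (b, x), (c, y) :: t =>
      if b = c then l₁.dropLast ++ (b, if b then x * y else y * x) :: t else l₁ ++ l₂
  | _, _ => l₁ ++ l₂

/-- The one-entry positive multifraction. -/
def mfPos [Monoid M] (x : M) : Multifraction M := ⟨[(true, x)], List.isChain_singleton _⟩

/-- The one-entry negative multifraction. -/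
def mfNeg [Monoid M] (x : M) : Multifraction M := ⟨[(false, x)], List.isChain_singleton _⟩

/-- `a` left divides `b`. -/
def LDvd [Monoid M] (a b : M) : Prop := ∃ c, a * c = b

/-- `a` right divides `b`. -/
def RDvd [Monoid M] (a b : M) : Prop := ∃ c, c * a = b

/-- `M` is (left and right) cancellative. -/
def Cancellative (M : Type*) [Monoid M] : Prop :=
  (∀ a b c : M, a * b = a * c → b = c) ∧ (∀ a b c : M, b * a = c * a → b = c)

/-- `1` is the only invertible element of `M`. -/
def TrivialUnits (M : Type*) [Monoid M] : Prop := ∀ a : M, IsUnit a → a = 1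

/-- Any two elements admit a left gcd. -/
def HasLeftGcds (M : Type*) [Monoid M] : Prop :=
  ∀ a b : M, ∃ d, LDvd d a ∧ LDvd d b ∧ ∀ e, LDvd e a → LDvd e b → LDvd e d

/-- Any two elements admit a right gcd. -/
def HasRightGcds (M : Type*) [Monoid M] : Prop :=
  ∀ a b : M, ∃ d, RDvd d a ∧ RDvd d b ∧ ∀ e, RDvd e a → RDvd e b → RDvd e d

/-- `M` is a gcd-monoid. -/
def GcdMonoidProp (M : Type*) [Monoid M] : Prop :=
  Cancellative M ∧ TrivialUnits M ∧ HasLeftGcds M ∧ HasRightGcds M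

/-- `m` is a right lcm of `u` and `v`. -/
def IsRightLcm [Monoid M] (u v m : M) : Prop :=
  LDvd u m ∧ LDvd v m ∧ ∀ w, LDvd u w → LDvd v w → LDvd m w

/-- `m` is a left lcm of `u` and `v`. -/
def IsLeftLcm [Monoid M] (u v m : M) : Prop :=
  RDvd u m ∧ RDvd v m ∧ ∀ w, RDvd u w → RDvd v w → RDvd m w

/-- `M` is a noetherian monoid: cancellative, with trivial units, and with well-founded
proper left and right divisibility. -/
def NoetherianMonoid (M : Type*) [Monoid M] : Prop :=
  Cancellative M ∧ TrivialUnits M ∧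
    WellFounded (fun a b : M => LDvd a b ∧ a ≠ b) ∧
    WellFounded (fun a b : M => RDvd a b ∧ a ≠ b)

/-- An atom of a monoid. -/
def MonAtom [Monoid M] (a : M) : Prop :=
  a ≠ 1 ∧ ∀ b c : M, a = b * c → b = 1 ∨ c = 1

/-- `η : M →* G` exhibits `G` as the enveloping (universal) group of `M`. -/
def IsEnvelopingGroup (M : Type*) [Monoid M] (G : Type*) [Group G] (η : M →* G) : Prop :=
  ∀ (H : Type*) [Group H] (f : M →* H), ∃! g : G →* H, g.comp η = f

/-- Evaluation of a multifraction in a group `G` through `η : M →* G`. -/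
def mfEval [Monoid M] {G : Type*} [Group G] (η : M →* G) (a : Multifraction M) : G :=
  (a.entries.map fun p => if p.1 then η p.2 else (η p.2)⁻¹).prod

/-- A multifraction is trivial if all its entries equal `1`. -/
def MfTrivial [Monoid M] (a : Multifraction M) : Prop := ∀ p ∈ a.entries, p.2 = 1

/-- `a` is a proper piece of `b` (relative to a monoid structure on multifractions). -/
def Piece [Monoid M] [Monoid (Multifraction M)] (a b : Multifraction M) : Prop :=
  ∃ c d : Multifraction M, b = c * a * d ∧ ¬(MfTrivial c ∧ MfTrivial d)

/-- The `j`-th entry of a multifraction (with default `(true, 1)`). -/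
def mfEntry [Monoid M] (a : Multifraction M) (j : ℕ) : Bool × M :=
  (a.entries[j]?).getD (true, 1)

/-- The reduction rule `R_{i,x}` (here `j = i - 1` is the 0-based level):
`b = a • R_{i,x}`. -/
def RedAt [Monoid M] (a b : Multifraction M) (j : ℕ) (x : M) : Prop :=
  b.entries.length = a.entries.length ∧ j + 1 < a.entries.length ∧
  (∀ k, ¬(j - 1 ≤ k ∧ k ≤ j + 1) → b.entries[k]? = a.entries[k]?) ∧
  (∀ k, (mfEntry b k).1 = (mfEntry a k).1) ∧
  (if (mfEntry a j).1 then
     if j = 0 then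
       (mfEntry b 0).2 * x = (mfEntry a 0).2 ∧ (mfEntry b 1).2 * x = (mfEntry a 1).2
     else ∃ x' : M,
       (mfEntry b (j - 1)).2 = x' * (mfEntry a (j - 1)).2 ∧
       (mfEntry b j).2 * x = x' * (mfEntry a j).2 ∧
       IsLeftLcm x (mfEntry a j).2 ((mfEntry b j).2 * x) ∧
       (mfEntry b (j + 1)).2 * x = (mfEntry a (j + 1)).2
   else
     if j = 0 then
       x * (mfEntry b 0).2 = (mfEntry a 0).2 ∧ x * (mfEntry b 1).2 = (mfEntry a 1).2
     else ∃ x' : M,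
       (mfEntry b (j - 1)).2 = (mfEntry a (j - 1)).2 * x' ∧
       x * (mfEntry b j).2 = (mfEntry a j).2 * x' ∧
       IsRightLcm x (mfEntry a j).2 (x * (mfEntry b j).2) ∧
       x * (mfEntry b (j + 1)).2 = (mfEntry a (j + 1)).2)

/-- One reduction step. -/
def Reduces [Monoid M] (a b : Multifraction M) : Prop := ∃ j x, x ≠ 1 ∧ RedAt a b j x

/-- A multifraction is reducible if some rule `R_{i,x}` with `x ≠ 1` applies to it. -/
def Reducible [Monoid M] (a : Multifraction M) : Prop := ∃ b, Reduces a b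

/-- Iterated reduction. -/
def ReducesStar [Monoid M] : Multifraction M → Multifraction M → Prop :=
  Relation.ReflTransGen Reduces

/-- Semi-convergence of reduction (relative to an enveloping group `η : M →* G`):
every unital multifraction reduces to a trivial one. -/
def SemiConvergent [Monoid M] {G : Type*} [Group G] (η : M →* G) : Prop :=
  ∀ a : Multifraction M, mfEval η a = 1 → ∃ b, ReducesStar a b ∧ MfTrivial b

end Defs

section Interval

variable (P : Type*) [PartialOrder P]

/-- The intervals of a poset `P`. -/
def Iv := {p : P × P // p.1 ≤ p.2}

/-- The defining relations of the interval monoid of `P`. -/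
def intervalRel : FreeMonoid (Iv P) → FreeMonoid (Iv P) → Prop := fun u v =>
  (∃ (x y z : P) (hxy : x ≤ y) (hyz : y ≤ z),
      u = FreeMonoid.of ⟨(x, z), hxy.trans hyz⟩ ∧
      v = FreeMonoid.of ⟨(x, y), hxy⟩ * FreeMonoid.of ⟨(y, z), hyz⟩) ∨
  (∃ x : P, u = FreeMonoid.of ⟨(x, x), le_refl x⟩ ∧ v = 1)

/-- The interval monoid of the poset `P`. -/
def IntervalMonoid := (conGen (intervalRel P)).Quotient

instance : Monoid (IntervalMonoid P) :=
  inferInstanceAs (Monoid (conGen (intervalRel P)).Quotient)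

variable {P}

/-- The generator `[x, y]` of the interval monoid. -/
def intv (I : Iv P) : IntervalMonoid P := (conGen (intervalRel P)).mk' (FreeMonoid.of I)

variable (P)

/-- `P` is a local lattice: each `P^{≥ x}` is a meet-semilattice and each `P^{≤ x}` is a
join-semilattice. -/
def LocalLattice : Prop :=
  (∀ x a b : P, x ≤ a → x ≤ b →
      ∃ m, x ≤ m ∧ m ≤ a ∧ m ≤ b ∧ ∀ c, x ≤ c → c ≤ a → c ≤ b → c ≤ m) ∧
  (∀ x a b : P, a ≤ x → b ≤ x →
      ∃ m, m ≤ x ∧ a ≤ m ∧ b ≤ m ∧ ∀ c, c ≤ x → a ≤ c → b ≤ c → m ≤ c)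

/-- Noetherianity conditions on the poset `P`: no infinite descending chain in any `P^{≥ x}`
and no infinite ascending chain in any `P^{≤ x}`. -/
def PosetNoethCond : Prop :=
  ∀ x : P, WellFounded (fun a b : {y : P // x ≤ y} => (a : P) < (b : P)) ∧
    WellFounded (fun a b : {y : P // y ≤ x} => (b : P) < (a : P))

variable {P}

/-- A simple multifraction on the interval monoid: each entry is a proper interval, and
consecutive entries share their target (at positive positions) or source (at negative ones). -/
def MfSimple (a : Multifraction (IntervalMonoid P)) : Prop :=
  ∃ l : List (Bool × Iv P),
    a.entries = l.map (fun p => (p.1, intv p.2)) ∧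
    (∀ p ∈ l, p.2.1.1 ≠ p.2.1.2) ∧
    l.Chain' fun p q => if p.1 then p.2.1.2 = q.2.1.2 else p.2.1.1 = q.2.1.1

/-- A positive `n`-zigzag in `P`. -/
def PosZigzag (n : ℕ) (x : ℕ → P) : Prop :=
  ∀ i ≤ n, i % 2 = 0 → (1 ≤ i → x i < x (i - 1)) ∧ (i < n → x i < x (i + 1))

/-- A negative `n`-zigzag in `P`. -/
def NegZigzag (n : ℕ) (x : ℕ → P) : Prop :=
  ∀ i ≤ n, i % 2 = 1 → (1 ≤ i → x i < x (i - 1)) ∧ (i < n → x i < x (i + 1))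

/-- The zigzag `x` is simple: `x₁, ..., xₙ` are pairwise distinct. -/
def SimpleZz (n : ℕ) (x : ℕ → P) : Prop :=
  ∀ i j, 1 ≤ i → i < j → j ≤ n → x i ≠ x j

/-- Reducibility of a zigzag at level `i`. -/
def ZzRedAt (n : ℕ) (x : ℕ → P) (i : ℕ) : Prop :=
  1 ≤ i ∧ i < n ∧
  ((2 ≤ i ∧ x i < x (i + 1) ∧
      ∃ y, x i < y ∧ y ≤ x (i + 1) ∧ ∃ u, x (i - 1) ≤ u ∧ y ≤ u) ∨
   (2 ≤ i ∧ x (i + 1) < x i ∧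
      ∃ y, x (i + 1) ≤ y ∧ y < x i ∧ ∃ u, u ≤ x (i - 1) ∧ u ≤ y) ∨
   (i = 1 ∧ x 0 < x 1 ∧ ∃ y, x 0 ≤ y ∧ y < x 1 ∧ x 2 ≤ y) ∨
   (i = 1 ∧ x 1 < x 0 ∧ ∃ y, x 1 < y ∧ y ≤ x 0 ∧ y ≤ x 2))

/-- A zigzag is reducible if it is reducible at some level. -/
def ZzReducible (n : ℕ) (x : ℕ → P) : Prop := ∃ i, ZzRedAt n x i

/-- The multifraction `a` is the image of the positive `n`-zigzag `x` under the map `F`. -/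
def PosImage (n : ℕ) (x : ℕ → P) (a : Multifraction (IntervalMonoid P)) : Prop :=
  a.entries.length = n ∧ ∀ j < n,
    if j % 2 = 0 then
      ∃ h : x j ≤ x (j + 1), a.entries[j]? = some (true, intv ⟨(x j, x (j + 1)), h⟩)
    else
      ∃ h : x (j + 1) ≤ x j, a.entries[j]? = some (false, intv ⟨(x (j + 1), x j), h⟩)

/-- The multifraction `a` is the image of the negative `n`-zigzag `x` under the map `F`. -/
def NegImage (n : ℕ) (x : ℕ → P) (a : Multifraction (IntervalMonoid P)) : Prop :=
  a.entries.length = n ∧ ∀ j < n,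
    if j % 2 = 0 then
      ∃ h : x (j + 1) ≤ x j, a.entries[j]? = some (false, intv ⟨(x (j + 1), x j), h⟩)
    else
      ∃ h : x j ≤ x (j + 1), a.entries[j]? = some (true, intv ⟨(x j, x (j + 1)), h⟩)

end Interval

/-! The generators act on words of intervals by prepending, where `[x, x]` is dropped and
`[x, y]` merges with a first letter `[y, z]` into `[x, z]`; the defining relations hold for this
action, so acting on the empty word gives every element a normal form: a word of proper
intervals `[x₁, y₁] ⋯ [xₙ, yₙ]` with `yᵢ ≠ xᵢ₊₁` whose product is the element. The normal form
of `a * b` is that of `a` followed by that of `b`, except that the last letter of `a` may merge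
with the first letter of `b`.

Hence a proper left divisor of `b` either has a shorter normal form, or the same one with the
last letter `[x, y]` shortened to `[x, y']`, `y' < y`. So proper left divisibility is
well-founded (shortlex on reversed normal forms) as soon as each `P^{≥ x}` has no infinite
descending chain; symmetrically on the right. Conversely `y ↦ [x, y]` embeds `P^{≥ x}` into
left divisibility and `y ↦ [y, x]` embeds the dual of `P^{≤ x}` into right divisibility.
An atom has a normal form of length one, `[x, y]` factors through every `z` with `x < z < y`,
and by the merging rule every nontrivial factorisation of `[x, y]` is of this kind. -/

namespace Iv

variable {P : Type*} [PartialOrder P]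

def merge (I J : Iv P) (h : I.1.2 = J.1.1) : Iv P :=
  ⟨(I.1.1, J.1.2), I.2.trans (h.trans_le J.2)⟩

open Classical in
noncomputable def prepend (I : Iv P) (l : List (Iv P)) : List (Iv P) :=
  if I.1.1 = I.1.2 then l
  else match l with
    | [] => [I]
    | J :: t => if h : I.1.2 = J.1.1 then I.merge J h :: t else I :: J :: t

section prepend

variable {I J : Iv P}

theorem prepend_of_eq (h : I.1.1 = I.1.2) (l : List (Iv P)) : I.prepend l = l := by
  simp [prepend, h]

theorem prepend_nil (h : I.1.1 ≠ I.1.2) : I.prepend [] = [I] := by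
  simp [prepend, h]

theorem prepend_cons_of_eq (h : I.1.1 ≠ I.1.2) (hIJ : I.1.2 = J.1.1) (t : List (Iv P)) :
    I.prepend (J :: t) = I.merge J hIJ :: t := by
  simp only [prepend, if_neg h, dif_pos hIJ]

theorem prepend_cons_of_ne (h : I.1.1 ≠ I.1.2) (hIJ : I.1.2 ≠ J.1.1) (t : List (Iv P)) :
    I.prepend (J :: t) = I :: J :: t := by
  simp only [prepend, if_neg h, dif_neg hIJ]

theorem prepend_prepend (h : I.1.2 = J.1.1) (l : List (Iv P)) :
    I.prepend (J.prepend l) = (I.merge J h).prepend l := by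
  by_cases hI : I.1.1 = I.1.2
  · rw [prepend_of_eq hI, show I.merge J h = J from Subtype.ext (Prod.ext (hI.trans h) rfl)]
  by_cases hJ : J.1.1 = J.1.2
  · rw [prepend_of_eq hJ, show I.merge J h = I from Subtype.ext (Prod.ext rfl (h.trans hJ).symm)]
  have hIJ : (I.merge J h).1.1 ≠ (I.merge J h).1.2 :=
    ((lt_of_le_of_ne I.2 hI).trans_le (h.trans_le J.2)).ne
  cases l with
  | nil => rw [prepend_nil hJ, prepend_cons_of_eq hI h, prepend_nil hIJ]
  | cons K t =>
    by_cases hK : J.1.2 = K.1.1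
    · rw [prepend_cons_of_eq hJ hK, prepend_cons_of_eq (J := J.merge K hK) hI h,
        prepend_cons_of_eq hIJ hK]
      rfl
    · rw [prepend_cons_of_ne hJ hK, prepend_cons_of_eq hI h, prepend_cons_of_ne hIJ hK]

theorem prepend_of_isChain {l : List (Iv P)} (hI : I.1.1 < I.1.2)
    (h : (I :: l).IsChain fun I J => I.1.2 ≠ J.1.1) : I.prepend l = I :: l := by
  cases l with
  | nil => exact prepend_nil hI.ne
  | cons J t => exact prepend_cons_of_ne hI.ne (List.isChain_cons_cons.1 h).1 t

end prepend

theorem foldr_prepend_eq_append {s l : List (Iv P)} (hs : ∀ I ∈ s, I.1.1 < I.1.2)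
    (hsl : (s ++ l).IsChain fun I J => I.1.2 ≠ J.1.1) : s.foldr prepend l = s ++ l := by
  induction s with
  | nil => rfl
  | cons I s ih =>
    rw [List.foldr_cons, ih (fun J hJ => hs J (List.mem_cons_of_mem I hJ)) hsl.tail]
    exact prepend_of_isChain (hs I List.mem_cons_self) hsl

def IsReducedWord (l : List (Iv P)) : Prop :=
  (∀ I ∈ l, I.1.1 < I.1.2) ∧ l.IsChain fun I J => I.1.2 ≠ J.1.1

theorem IsReducedWord.prepend {l : List (Iv P)} (hl : IsReducedWord l) (I : Iv P) :
    IsReducedWord (I.prepend l) := by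
  by_cases hI : I.1.1 = I.1.2
  · rwa [prepend_of_eq hI]
  have hIlt : I.1.1 < I.1.2 := lt_of_le_of_ne I.2 hI
  cases l with
  | nil => exact ⟨by simpa [prepend_nil hI], by simp [prepend_nil hI]⟩
  | cons J t =>
    obtain ⟨hlt, hchain⟩ := hl
    by_cases hIJ : I.1.2 = J.1.1
    · rw [prepend_cons_of_eq hI hIJ]
      refine ⟨?_, List.isChain_cons.2 ⟨(List.isChain_cons.1 hchain).1, hchain.tail⟩⟩
      rintro K (_ | ⟨_, hK⟩)
      · exact hIlt.trans_le (hIJ.trans_le J.2)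
      · exact hlt K (List.mem_cons_of_mem J hK)
    · rw [prepend_cons_of_ne hI hIJ]
      exact ⟨List.forall_mem_cons.2 ⟨hIlt, hlt⟩, List.isChain_cons_cons.2 ⟨hIJ, hchain⟩⟩

def ProperInitial (I J : Iv P) : Prop := I.1.1 = J.1.1 ∧ I.1.2 < J.1.2

def ProperFinal (I J : Iv P) : Prop := I.1.2 = J.1.2 ∧ J.1.1 < I.1.1

theorem wellFounded_properInitial
    (h : ∀ x : P, WellFounded fun a b : {y : P // x ≤ y} => (a : P) < (b : P)) :
    WellFounded (ProperInitial (P := P)) := by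
  suffices key : ∀ x (y : {y : P // x ≤ y}), Acc ProperInitial (⟨(x, y.1), y.2⟩ : Iv P) from
    ⟨fun I => key I.1.1 ⟨I.1.2, I.2⟩⟩
  intro x y
  induction y using (h x).induction with
  | h y ih =>
    refine ⟨_, fun ⟨⟨x', z⟩, hxz⟩ ⟨hx, hz⟩ => ?_⟩
    obtain rfl : x' = x := hx
    exact ih ⟨z, hxz⟩ hz

theorem wellFounded_properFinal
    (h : ∀ x : P, WellFounded fun a b : {y : P // y ≤ x} => (b : P) < (a : P)) :
    WellFounded (ProperFinal (P := P)) := by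
  suffices key : ∀ z (y : {y : P // y ≤ z}), Acc ProperFinal (⟨(y.1, z), y.2⟩ : Iv P) from
    ⟨fun I => key I.1.2 ⟨I.1.1, I.2⟩⟩
  intro z y
  induction y using (h z).induction with
  | h y ih =>
    refine ⟨_, fun ⟨⟨x, z'⟩, hxz⟩ ⟨hz, hx⟩ => ?_⟩
    obtain rfl : z' = z := hz
    exact ih ⟨x, hxz⟩ hx

end Iv

namespace IntervalMonoid

variable {P : Type*} [PartialOrder P]

theorem intv_eq_one {I : Iv P} (h : I.1.1 = I.1.2) : intv I = 1 := by
  obtain ⟨⟨x, y⟩, hxy⟩ := I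
  obtain rfl : x = y := h
  exact (Con.eq _).2 <| ConGen.Rel.of _ _ <| Or.inr ⟨x, rfl, rfl⟩

theorem intv_merge {I J : Iv P} (h : I.1.2 = J.1.1) : intv (I.merge J h) = intv I * intv J := by
  obtain ⟨⟨x, y⟩, hxy⟩ := I
  obtain ⟨⟨y', z⟩, hyz⟩ := J
  obtain rfl : y = y' := h
  exact (Con.eq _).2 <| ConGen.Rel.of _ _ <| Or.inl ⟨x, y, z, hxy, hyz, rfl, rfl⟩

@[elab_as_elim]
theorem induction_on {C : IntervalMonoid P → Prop} (a : IntervalMonoid P) (one : C 1)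
    (intv_mul : ∀ I a, C a → C (intv I * a)) : C a := by
  obtain ⟨u, rfl⟩ := Con.mk'_surjective a
  induction u using FreeMonoid.inductionOn' with
  | one => exact one
  | of_mul I u ih => exact intv_mul I _ ih

noncomputable def leftAct : IntervalMonoid P →* Function.End (List (Iv P)) :=
  (conGen (intervalRel P)).lift (FreeMonoid.lift fun I => (I.prepend : Function.End _)) <|
    Con.conGen_le.2 <| by
      rintro u v (⟨x, y, z, hxy, hyz, rfl, rfl⟩ | ⟨x, rfl, rfl⟩) <;> rw [Con.ker_rel]
      · rw [map_mul]
        exact funext fun l =>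
          (Iv.prepend_prepend (I := ⟨(x, y), hxy⟩) (J := ⟨(y, z), hyz⟩) rfl l).symm
      · exact funext (Iv.prepend_of_eq rfl)

theorem leftAct_intv (I : Iv P) : leftAct (intv I) = I.prepend := rfl

theorem leftAct_mul_apply (a b : IntervalMonoid P) (l : List (Iv P)) :
    leftAct (a * b) l = leftAct a (leftAct b l) := by
  rw [map_mul]; rfl

theorem leftAct_prod_map_intv (w l : List (Iv P)) :
    leftAct (w.map intv).prod l = w.foldr Iv.prepend l := by
  induction w with
  | nil => rw [List.map_nil, List.prod_nil, map_one]; rfl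
  | cons I w ih => rw [List.map_cons, List.prod_cons, leftAct_mul_apply, ih]; rfl

theorem prod_map_intv_prepend (I : Iv P) (l : List (Iv P)) :
    ((I.prepend l).map intv).prod = intv I * (l.map intv).prod := by
  by_cases hI : I.1.1 = I.1.2
  · rw [Iv.prepend_of_eq hI, intv_eq_one hI, one_mul]
  cases l with
  | nil => simp [Iv.prepend_nil hI]
  | cons J t =>
    by_cases hIJ : I.1.2 = J.1.1
    · simp [Iv.prepend_cons_of_eq hI hIJ, intv_merge, mul_assoc]
    · simp [Iv.prepend_cons_of_ne hI hIJ]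

theorem prod_map_intv_leftAct (a : IntervalMonoid P) (l : List (Iv P)) :
    ((leftAct a l).map intv).prod = a * (l.map intv).prod := by
  induction a using induction_on with
  | one => rw [map_one, one_mul]; rfl
  | intv_mul I a ih =>
    rw [leftAct_mul_apply, leftAct_intv, prod_map_intv_prepend, ih, mul_assoc]

noncomputable def normalForm (a : IntervalMonoid P) : List (Iv P) := leftAct a []

theorem prod_map_intv_normalForm (a : IntervalMonoid P) : ((normalForm a).map intv).prod = a :=
  (prod_map_intv_leftAct a []).trans (mul_one a)

theorem normalForm_injective : Function.Injective (normalForm : IntervalMonoid P → List (Iv P)) :=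
  fun a b h => by rw [← prod_map_intv_normalForm a, h, prod_map_intv_normalForm]

theorem normalForm_one : normalForm (1 : IntervalMonoid P) = [] := by
  rw [normalForm, map_one]; rfl

theorem normalForm_eq_nil {a : IntervalMonoid P} : normalForm a = [] ↔ a = 1 :=
  ⟨fun h => normalForm_injective (h.trans normalForm_one.symm), fun h => h ▸ normalForm_one⟩

theorem normalForm_intv (I : Iv P) : normalForm (intv I) = I.prepend [] := rfl

theorem normalForm_mul (a b : IntervalMonoid P) :
    normalForm (a * b) = (normalForm a).foldr Iv.prepend (normalForm b) := by
  rw [normalForm, leftAct_mul_apply, ← leftAct_prod_map_intv, prod_map_intv_normalForm]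
  rfl

theorem isReducedWord_normalForm (a : IntervalMonoid P) : Iv.IsReducedWord (normalForm a) := by
  induction a using induction_on with
  | one => rw [normalForm_one]; exact ⟨by simp, List.isChain_nil⟩
  | intv_mul I a ih => rw [normalForm, leftAct_mul_apply, leftAct_intv]; exact ih.prepend I

theorem normalForm_mul_eq_append_or_merge (a b : IntervalMonoid P) :
    normalForm (a * b) = normalForm a ++ normalForm b ∨
      ∃ (s : List (Iv P)) (K J : Iv P) (t : List (Iv P)) (h : K.1.2 = J.1.1),
        normalForm a = s ++ [K] ∧ normalForm b = J :: t ∧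
        normalForm (a * b) = s ++ K.merge J h :: t := by
  rw [normalForm_mul]
  obtain ⟨hlt_a, hchain_a⟩ := isReducedWord_normalForm a
  obtain ⟨-, hchain_b⟩ := isReducedWord_normalForm b
  rcases (normalForm a).eq_nil_or_concat with ha | ⟨s, K, ha⟩
  · left; rw [ha]; rfl
  rw [List.concat_eq_append] at ha
  rw [ha] at hlt_a hchain_a ⊢
  have hK : K.1.1 < K.1.2 := hlt_a K (by simp)
  have hs : ∀ I ∈ s, I.1.1 < I.1.2 := fun I hI => hlt_a I (by simp [hI])
  rw [List.foldr_append, List.foldr_cons, List.foldr_nil]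
  cases hb : normalForm b with
  | nil =>
    left
    rw [Iv.prepend_nil hK.ne, Iv.foldr_prepend_eq_append hs hchain_a, List.append_nil]
  | cons J t =>
    rw [hb] at hchain_b
    by_cases hKJ : K.1.2 = J.1.1
    · right
      refine ⟨s, K, J, t, hKJ, rfl, rfl, ?_⟩
      rw [Iv.prepend_cons_of_eq hK.ne hKJ]
      refine Iv.foldr_prepend_eq_append hs (List.isChain_append.2 ⟨hchain_a.left_of_append,
        List.isChain_cons.2 ⟨(List.isChain_cons.1 hchain_b).1, hchain_b.tail⟩, ?_⟩)
      intro I hI M hM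
      simp only [List.head?_cons, Option.mem_def, Option.some.injEq] at hM
      subst hM
      exact (List.isChain_append.1 hchain_a).2.2 I hI K rfl
    · left
      rw [Iv.prepend_cons_of_ne hK.ne hKJ, Iv.foldr_prepend_eq_append hs, List.append_assoc]
      · rfl
      refine List.append_assoc s [K] (J :: t) ▸ List.isChain_append.2 ⟨hchain_a, hchain_b, ?_⟩
      simpa using hKJ

theorem wellFounded_ldvd
    (h : ∀ x : P, WellFounded fun a b : {y : P // x ≤ y} => (a : P) < (b : P)) :
    WellFounded fun a b : IntervalMonoid P => LDvd a b ∧ a ≠ b := by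
  refine Subrelation.wf ?_ <| InvImage.wf (fun a => (normalForm a).reverse)
    (List.Shortlex.wf (Iv.wellFounded_properInitial h))
  rintro a _ ⟨⟨c, rfl⟩, hne⟩
  show List.Shortlex _ (normalForm a).reverse (normalForm (a * c)).reverse
  rcases normalForm_mul_eq_append_or_merge a c with h | ⟨s, K, J, t, hKJ, ha, hc, h⟩
  · have hc : normalForm c ≠ [] := fun hc => hne (by rw [normalForm_eq_nil.1 hc, mul_one])
    apply List.Shortlex.of_length_lt
    rw [List.length_reverse, List.length_reverse, h, List.length_append]
    have := List.length_pos_iff.2 hc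
    omega
  rw [ha, h]
  cases t with
  | nil =>
    refine List.Shortlex.of_lex (by simp) ?_
    simp only [List.reverse_append, List.reverse_cons, List.reverse_nil, List.nil_append]
    exact List.Lex.rel ⟨rfl, hKJ.trans_lt ((isReducedWord_normalForm c).1 J (by simp [hc]))⟩
  | cons M t => exact List.Shortlex.of_length_lt (by simp; omega)

theorem wellFounded_rdvd
    (h : ∀ x : P, WellFounded fun a b : {y : P // y ≤ x} => (b : P) < (a : P)) :
    WellFounded fun a b : IntervalMonoid P => RDvd a b ∧ a ≠ b := by
  refine Subrelation.wf ?_ <|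
    InvImage.wf normalForm (List.Shortlex.wf (Iv.wellFounded_properFinal h))
  rintro a _ ⟨⟨c, rfl⟩, hne⟩
  show List.Shortlex _ (normalForm a) (normalForm (c * a))
  rcases normalForm_mul_eq_append_or_merge c a with h | ⟨s, K, J, t, hKJ, hc, ha, h⟩
  · have hc : normalForm c ≠ [] := fun hc => hne (by rw [normalForm_eq_nil.1 hc, one_mul])
    apply List.Shortlex.of_length_lt
    rw [h, List.length_append]
    have := List.length_pos_iff.2 hc
    omega
  rw [ha, h]
  cases s with
  | nil =>
    refine List.Shortlex.of_lex rfl (List.Lex.rel ⟨rfl, ?_⟩)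
    exact ((isReducedWord_normalForm c).1 K (by simp [hc])).trans_eq hKJ
  | cons M s => exact List.Shortlex.of_length_lt (by simp)

theorem intv_ne_one {I : Iv P} (h : I.1.1 ≠ I.1.2) : intv I ≠ 1 := fun h1 => by
  simpa [normalForm_intv, Iv.prepend_nil h, normalForm_one] using congrArg normalForm h1

theorem eq_of_intv_eq_intv {I J : Iv P} (hJ : J.1.1 ≠ J.1.2) (h : intv I = intv J) : I = J := by
  have h' := congrArg normalForm h
  rw [normalForm_intv, normalForm_intv, Iv.prepend_nil hJ] at h'
  by_cases hI : I.1.1 = I.1.2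
  · rw [Iv.prepend_of_eq hI] at h'
    exact absurd h' (List.cons_ne_nil J []).symm
  · rwa [Iv.prepend_nil hI, List.singleton_inj] at h'

theorem wellFounded_lt_of_wellFounded_ldvd
    (h : WellFounded fun a b : IntervalMonoid P => LDvd a b ∧ a ≠ b) (x : P) :
    WellFounded fun a b : {y : P // x ≤ y} => (a : P) < (b : P) := by
  refine Subrelation.wf ?_ <| InvImage.wf (fun y : {y : P // x ≤ y} => intv ⟨(x, y.1), y.2⟩) h
  intro a b hab
  refine ⟨⟨intv ⟨(a.1, b.1), hab.le⟩,
    (intv_merge (I := ⟨(x, a.1), a.2⟩) (J := ⟨(a.1, b.1), hab.le⟩) rfl).symm⟩,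
    fun he => ?_⟩
  exact hab.ne (congrArg (·.1.2) (eq_of_intv_eq_intv (a.2.trans_lt hab).ne he))

theorem wellFounded_gt_of_wellFounded_rdvd
    (h : WellFounded fun a b : IntervalMonoid P => RDvd a b ∧ a ≠ b) (x : P) :
    WellFounded fun a b : {y : P // y ≤ x} => (b : P) < (a : P) := by
  refine Subrelation.wf ?_ <| InvImage.wf (fun y : {y : P // y ≤ x} => intv ⟨(y.1, x), y.2⟩) h
  intro a b hba
  refine ⟨⟨intv ⟨(b.1, a.1), hba.le⟩,
    (intv_merge (I := ⟨(b.1, a.1), hba.le⟩) (J := ⟨(a.1, x), a.2⟩) rfl).symm⟩,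
    fun he => ?_⟩
  exact hba.ne' (congrArg (·.1.1) (eq_of_intv_eq_intv (hba.trans_le a.2).ne he))

theorem exists_covBy_of_monAtom {a : IntervalMonoid P} (ha : MonAtom a) :
    ∃ I : Iv P, I.1.1 ⋖ I.1.2 ∧ a = intv I := by
  obtain ⟨hne, hsplit⟩ := ha
  have hlt := (isReducedWord_normalForm a).1
  have hprod := prod_map_intv_normalForm a
  rcases hnf : normalForm a with _ | ⟨I, _ | ⟨J, t⟩⟩
  · exact absurd (normalForm_eq_nil.1 hnf) hne
  · have hI := hlt I (by simp [hnf])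
    have ha : a = intv I := by simpa [hnf] using hprod.symm
    refine ⟨I, ⟨hI, fun z hxz hzy => ?_⟩, ha⟩
    rcases hsplit _ _ <| ha.trans
      (intv_merge (I := ⟨(I.1.1, z), hxz.le⟩) (J := ⟨(z, I.1.2), hzy.le⟩) rfl) with h | h
    · exact intv_ne_one hxz.ne h
    · exact intv_ne_one hzy.ne h
  · have hI := hlt I (by simp [hnf])
    rw [hnf, List.map_cons, List.prod_cons] at hprod
    rcases hsplit _ _ hprod.symm with h | h
    · exact absurd h (intv_ne_one hI.ne)
    · rw [h, mul_one] at hprod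
      have := hnf.symm.trans (congrArg normalForm hprod.symm)
      simp [normalForm_intv, Iv.prepend_nil hI.ne] at this

theorem monAtom_intv_of_covBy {I : Iv P} (hI : I.1.1 ⋖ I.1.2) : MonAtom (intv I) := by
  refine ⟨intv_ne_one hI.lt.ne, fun b c hbc => ?_⟩
  have hnf : normalForm (b * c) = [I] := by rw [← hbc, normalForm_intv, Iv.prepend_nil hI.lt.ne]
  rcases normalForm_mul_eq_append_or_merge b c with h | ⟨s, K, J, t, hKJ, hb, hc, h⟩
  · rcases List.append_eq_singleton_iff.1 (h.symm.trans hnf) with ⟨hb, -⟩ | ⟨-, hc⟩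
    · exact Or.inl (normalForm_eq_nil.1 hb)
    · exact Or.inr (normalForm_eq_nil.1 hc)
  · have hK := (isReducedWord_normalForm b).1 K (by simp [hb])
    have hJ := (isReducedWord_normalForm c).1 J (by simp [hc])
    rw [h, List.append_eq_singleton_iff] at hnf
    simp only [List.cons_ne_nil, and_false, or_false, List.cons.injEq] at hnf
    obtain ⟨-, rfl, -⟩ := hnf
    exact (hI.2 hK (hKJ.trans_lt hJ)).elim

theorem monAtom_iff {a : IntervalMonoid P} :
    MonAtom a ↔ ∃ I : Iv P, I.1.1 ⋖ I.1.2 ∧ a = intv I :=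
  ⟨exists_covBy_of_monAtom, fun ⟨_, hI, ha⟩ => ha ▸ monAtom_intv_of_covBy hI⟩

end IntervalMonoid

/-- The interval monoid of `P` is noetherian iff every `P^{≥x}` has no infinite descending
chain and every `P^{≤x}` has no infinite ascending chain; and then the atoms of `Int(P)`
are exactly the elementary intervals `[x, y]` with `y` an immediate successor of `x`. -/
theorem intervalMonoid_noetherian_iff_and_atoms (P : Type*) [PartialOrder P] :
    ((WellFounded (fun a b : IntervalMonoid P => LDvd a b ∧ a ≠ b) ∧
      WellFounded (fun a b : IntervalMonoid P => RDvd a b ∧ a ≠ b)) ↔ PosetNoethCond P) ∧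
    (PosetNoethCond P →
      ∀ a : IntervalMonoid P,
        MonAtom a ↔ ∃ (x y : P) (h : x ≤ y), x ⋖ y ∧ a = intv ⟨(x, y), h⟩) := by
  open IntervalMonoid in
  refine ⟨⟨fun ⟨hl, hr⟩ x => ⟨wellFounded_lt_of_wellFounded_ldvd hl x,
      wellFounded_gt_of_wellFounded_rdvd hr x⟩,
    fun h => ⟨wellFounded_ldvd fun x => (h x).1, wellFounded_rdvd fun x => (h x).2⟩⟩,
    fun _ a => monAtom_iff.trans ⟨?_, ?_⟩⟩
  · rintro ⟨I, hI, rfl⟩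
    exact ⟨I.1.1, I.1.2, I.2, hI, rfl⟩
  · rintro ⟨x, y, hxy, hcov, rfl⟩
    exact ⟨⟨(x, y), hxy⟩, hcov, rfl⟩
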